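/- arXiv:2109.01320 — 2 statements merged into one kernel-verified Lean document; each statement's English description precedes it below -/
import Mathlib

section
/- Given r > 0, for all z, u, v ∈ U with β(u,v) ≤ r, one has (1 − tanh r)/(1 + tanh r) ≤ |ρ(z,u)|/|ρ(z,v)| ≤ (1 + tanh r)/(1 − tanh r), where β is the Bergman metric on U. -/
open Complex MeasureTheory

noncomputable section

/-- The Siegel upper half-space `U ⊂ ℂ^(m+1)`, points written `z = (z', zₙ)`. -/
def Siegel (m : ℕ) : Set ((Fin m → ℂ) × ℂ) :=
  {z | ∑ j, ‖z.1 j‖ ^ 2 < z.2.im}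

/-- `ρ(z,w) = (i/2)(conj wₙ − zₙ) − z′ ⋅ conj w′`. -/
def rhoC {m : ℕ} (z w : (Fin m → ℂ) × ℂ) : ℂ :=
  Complex.I / 2 * (starRingEnd ℂ w.2 - z.2) - ∑ j, z.1 j * starRingEnd ℂ (w.1 j)

/-- `ρ(z) = Im zₙ − |z′|²`. -/
def rho {m : ℕ} (z : (Fin m → ℂ) × ℂ) : ℝ :=
  z.2.im - ∑ j, ‖z.1 j‖ ^ 2

/-- The inverse hyperbolic tangent. -/
def artanhR (x : ℝ) : ℝ := (1 / 2) * Real.log ((1 + x) / (1 - x))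

/-- The Bergman metric `β(z,w) = tanh⁻¹ √(1 − ρ(z)ρ(w)/|ρ(z,w)|²)` on the Siegel domain. -/
def bDist {m : ℕ} (z w : (Fin m → ℂ) × ℂ) : ℝ :=
  artanhR (Real.sqrt (1 - rho z * rho w / ‖rhoC z w‖ ^ 2))

/-- The Bergman metric ball `D(z,r)`. -/
def bBall {m : ℕ} (z : (Fin m → ℂ) × ℂ) (r : ℝ) : Set ((Fin m → ℂ) × ℂ) :=
  {w ∈ Siegel m | bDist z w < r}

/-! The lift `z ↦ ((1 - i zₙ)/2, ((1 + i zₙ)/2, z′))` turns `ρ(z,w)` into the Hermitian form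
`⟪x, y⟫ = x₀ ȳ₀ - ⟨y′, x′⟩` of signature `(1, n)`, and points of `U` into timelike vectors
(`⟪x, x⟫ = ρ > 0`), any two of which differ by a non-timelike vector. The form is negative
semidefinite on the orthogonal complement of a timelike `z`, so Cauchy–Schwarz holds there; applied
to the projections `⟪z, z⟫ u - ⟪u, z⟫ z` it gives the reverse Cauchy–Schwarz inequality
`ρ(u)ρ(v) ≤ |ρ(u,v)|²` and the three-point inequality
`ρ(v)|ρ(z,u)|² + ρ(u)|ρ(z,v)|² ≤ 2 |ρ(u,v)| |ρ(z,u)| |ρ(z,v)|`.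
This is a quadratic inequality for the ratio `|ρ(z,u)| / |ρ(z,v)|`; since `β(u,v) ≤ r` means
`|ρ(u,v)|² (1 - tanh² r) ≤ ρ(u)ρ(v)`, and `ρ(u) + ρ(v) ≤ 2 |ρ(u,v)|`, its roots lie between
`(1 - tanh r)/(1 + tanh r)` and `(1 + tanh r)/(1 - tanh r)`. -/

open ComplexConjugate

section Lorentz

variable {F : Type*} [NormedAddCommGroup F] [InnerProductSpace ℂ F]

def lorentzInner (x y : ℂ × F) : ℂ := x.1 * conj y.1 - inner ℂ y.2 x.2

def lorentzNormSq (x : ℂ × F) : ℝ := ‖x.1‖ ^ 2 - ‖x.2‖ ^ 2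

theorem lorentzInner_self (x : ℂ × F) : lorentzInner x x = lorentzNormSq x := by
  simp [lorentzInner, lorentzNormSq, Complex.mul_conj, Complex.normSq_eq_norm_sq,
    inner_self_eq_norm_sq_to_K]

@[simp]
theorem conj_lorentzInner (x y : ℂ × F) : conj (lorentzInner x y) = lorentzInner y x := by
  simp [lorentzInner, mul_comm]

theorem norm_lorentzInner_comm (x y : ℂ × F) : ‖lorentzInner x y‖ = ‖lorentzInner y x‖ := by
  rw [← conj_lorentzInner, RCLike.norm_conj]

theorem lorentzInner_mul_lorentzInner_swap (x y : ℂ × F) :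
    lorentzInner x y * lorentzInner y x = (‖lorentzInner x y‖ ^ 2 : ℝ) := by
  rw [← conj_lorentzInner x y, Complex.mul_conj, Complex.normSq_eq_norm_sq]

@[simp]
theorem lorentzInner_add_left (x y w : ℂ × F) :
    lorentzInner (x + y) w = lorentzInner x w + lorentzInner y w := by
  simp only [lorentzInner, Prod.fst_add, Prod.snd_add, inner_add_right]; ring

@[simp]
theorem lorentzInner_add_right (x y w : ℂ × F) :
    lorentzInner w (x + y) = lorentzInner w x + lorentzInner w y := by
  simp only [lorentzInner, Prod.fst_add, Prod.snd_add, inner_add_left, map_add]; ring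

@[simp]
theorem lorentzInner_smul_left (c : ℂ) (x y : ℂ × F) :
    lorentzInner (c • x) y = c * lorentzInner x y := by
  simp only [lorentzInner, Prod.smul_fst, Prod.smul_snd, inner_smul_right, smul_eq_mul]; ring

@[simp]
theorem lorentzInner_smul_right (c : ℂ) (x y : ℂ × F) :
    lorentzInner x (c • y) = conj c * lorentzInner x y := by
  simp only [lorentzInner, Prod.smul_fst, Prod.smul_snd, inner_smul_left, smul_eq_mul,
    map_mul]; ring

@[simp]
theorem lorentzInner_sub_left (x y w : ℂ × F) :
    lorentzInner (x - y) w = lorentzInner x w - lorentzInner y w := by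
  simp only [lorentzInner, Prod.fst_sub, Prod.snd_sub, inner_sub_right]; ring

@[simp]
theorem lorentzInner_sub_right (x y w : ℂ × F) :
    lorentzInner w (x - y) = lorentzInner w x - lorentzInner w y := by
  simp only [lorentzInner, Prod.fst_sub, Prod.snd_sub, inner_sub_left, map_sub]; ring

theorem lorentzNormSq_sub (x y : ℂ × F) :
    lorentzNormSq (x - y) = lorentzNormSq x + lorentzNormSq y - 2 * (lorentzInner x y).re := by
  have h₁ : (y.1 * conj x.1).re = (x.1 * conj y.1).re := by
    rw [← Complex.conj_re, map_mul, Complex.conj_conj, mul_comm]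
  simp only [lorentzNormSq, lorentzInner, Prod.fst_sub, Prod.snd_sub, norm_sub_sq (𝕜 := ℂ),
    Complex.sub_re, RCLike.inner_apply, RCLike.re_to_complex, h₁, inner_re_symm (𝕜 := ℂ) x.2]
  ring

theorem lorentzNormSq_nonpos_of_lorentzInner_eq_zero {x z : ℂ × F} (hz : 0 < lorentzNormSq z)
    (hx : lorentzInner x z = 0) : lorentzNormSq x ≤ 0 := by
  have hz₂ : ‖z.2‖ < ‖z.1‖ := by
    unfold lorentzNormSq at hz
    nlinarith [norm_nonneg z.1, norm_nonneg z.2]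
  have hxz : ‖x.1‖ * ‖z.1‖ ≤ ‖x.2‖ * ‖z.1‖ :=
    calc ‖x.1‖ * ‖z.1‖ = ‖inner ℂ z.2 x.2‖ := by
          rw [← sub_eq_zero.mp hx, norm_mul, RCLike.norm_conj]
      _ ≤ ‖z.2‖ * ‖x.2‖ := norm_inner_le_norm _ _
      _ ≤ ‖x.2‖ * ‖z.1‖ := by rw [mul_comm]; gcongr
  have hx₁ : ‖x.1‖ ≤ ‖x.2‖ := le_of_mul_le_mul_right hxz (by linarith [norm_nonneg z.2])
  unfold lorentzNormSq
  nlinarith [norm_nonneg x.1]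

def lorentzProj (z x : ℂ × F) : ℂ × F := lorentzInner z z • x - lorentzInner x z • z

theorem lorentzInner_lorentzProj_left (z x : ℂ × F) : lorentzInner (lorentzProj z x) z = 0 := by
  simp only [lorentzProj, lorentzInner_sub_left, lorentzInner_smul_left]
  ring

theorem lorentzInner_lorentzProj (z x y : ℂ × F) :
    lorentzInner (lorentzProj z x) (lorentzProj z y) =
      lorentzInner z z *
        (lorentzInner z z * lorentzInner x y - lorentzInner x z * lorentzInner z y) := by
  simp only [lorentzProj, lorentzInner_sub_left, lorentzInner_sub_right, lorentzInner_smul_left,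
    lorentzInner_smul_right, conj_lorentzInner]
  ring

theorem lorentzNormSq_lorentzProj (z x : ℂ × F) :
    lorentzNormSq (lorentzProj z x) =
      lorentzNormSq z * (lorentzNormSq z * lorentzNormSq x - ‖lorentzInner x z‖ ^ 2) := by
  have h := lorentzInner_lorentzProj z x x
  rw [lorentzInner_self, lorentzInner_self, lorentzInner_self,
    lorentzInner_mul_lorentzInner_swap] at h
  exact_mod_cast h

def lorentzOrth (z : ℂ × F) : Submodule ℂ (ℂ × F) where
  carrier := {x | lorentzInner x z = 0}
  add_mem' hx hy := by simp_all
  zero_mem' := by simp [lorentzInner]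
  smul_mem' c x hx := by simp_all

@[reducible]
def lorentzOrthCore {z : ℂ × F} (hz : 0 < lorentzNormSq z) :
    PreInnerProductSpace.Core ℂ (lorentzOrth z) where
  inner x y := -lorentzInner (y : ℂ × F) x
  conj_inner_symm x y := by simp
  re_inner_nonneg x := by
    simpa [lorentzInner_self] using lorentzNormSq_nonpos_of_lorentzInner_eq_zero hz x.2
  add_left x y w := by simp; ring
  smul_left x y c := by simp

theorem norm_lorentzInner_sq_le_of_orth {x y z : ℂ × F} (hz : 0 < lorentzNormSq z)
    (hx : lorentzInner x z = 0) (hy : lorentzInner y z = 0) :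
    ‖lorentzInner x y‖ ^ 2 ≤ lorentzNormSq x * lorentzNormSq y := by
  let := lorentzOrthCore hz
  have h := InnerProductSpace.Core.inner_mul_inner_self_le (𝕜 := ℂ)
    (⟨x, hx⟩ : lorentzOrth z) (⟨y, hy⟩ : lorentzOrth z)
  change ‖-lorentzInner y x‖ * ‖-lorentzInner x y‖ ≤
    (-lorentzInner x x).re * (-lorentzInner y y).re at h
  rw [norm_neg, norm_neg, norm_lorentzInner_comm y x, lorentzInner_self, lorentzInner_self] at h
  simpa [sq] using h

theorem lorentzNormSq_mul_le_norm_lorentzInner_sq {z : ℂ × F} (hz : 0 < lorentzNormSq z)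
    (x : ℂ × F) : lorentzNormSq z * lorentzNormSq x ≤ ‖lorentzInner x z‖ ^ 2 := by
  have h := lorentzNormSq_nonpos_of_lorentzInner_eq_zero hz (lorentzInner_lorentzProj_left z x)
  rw [lorentzNormSq_lorentzProj] at h
  nlinarith

theorem norm_lorentzNormSq_mul_lorentzInner_sub_sq_le {z : ℂ × F} (hz : 0 < lorentzNormSq z)
    (x y : ℂ × F) :
    ‖lorentzNormSq z * lorentzInner x y - lorentzInner x z * lorentzInner z y‖ ^ 2 ≤
      (‖lorentzInner x z‖ ^ 2 - lorentzNormSq z * lorentzNormSq x) *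
        (‖lorentzInner y z‖ ^ 2 - lorentzNormSq z * lorentzNormSq y) := by
  have h := norm_lorentzInner_sq_le_of_orth hz (lorentzInner_lorentzProj_left z x)
    (lorentzInner_lorentzProj_left z y)
  rw [lorentzInner_lorentzProj, lorentzNormSq_lorentzProj, lorentzNormSq_lorentzProj,
    lorentzInner_self, norm_mul, Complex.norm_real, Real.norm_of_nonneg hz.le] at h
  have hz2 : 0 < lorentzNormSq z ^ 2 := by positivity
  nlinarith

theorem lorentzNormSq_mul_norm_lorentzInner_sq_add_le {x y z : ℂ × F} (hz : 0 < lorentzNormSq z)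
    (hx : 0 < lorentzNormSq x) :
    lorentzNormSq y * ‖lorentzInner z x‖ ^ 2 + lorentzNormSq x * ‖lorentzInner z y‖ ^ 2 ≤
      2 * ‖lorentzInner x y‖ * ‖lorentzInner z x‖ * ‖lorentzInner z y‖ := by
  have hgram := norm_lorentzNormSq_mul_lorentzInner_sub_sq_le hz x y
  have hlow := abs_norm_sub_norm_le (lorentzNormSq z * lorentzInner x y)
    (lorentzInner x z * lorentzInner z y)
  have hrev := lorentzNormSq_mul_le_norm_lorentzInner_sq hx y
  rw [norm_mul, norm_mul, Complex.norm_real, Real.norm_of_nonneg hz.le] at hlow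
  rw [norm_lorentzInner_comm x z] at hgram hlow
  rw [norm_lorentzInner_comm y x] at hrev
  rw [norm_lorentzInner_comm y z] at hgram
  set p := lorentzNormSq z
  set A := ‖lorentzInner z x‖
  set B := ‖lorentzInner z y‖
  set C := ‖lorentzInner x y‖
  have hsq :
      (p * C - A * B) ^ 2 ≤ (A ^ 2 - p * lorentzNormSq x) * (B ^ 2 - p * lorentzNormSq y) :=
    (sq_le_sq' (abs_le.mp hlow).1 (abs_le.mp hlow).2).trans hgram
  have hp : p * (lorentzNormSq y * A ^ 2 + lorentzNormSq x * B ^ 2) ≤ p * (2 * C * A * B) := by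
    nlinarith [mul_le_mul_of_nonneg_left hrev (sq_nonneg p)]
  exact le_of_mul_le_mul_left hp hz

end Lorentz

theorem mul_one_sub_le_mul_one_add {A B C q s T : ℝ} (hq : 0 < q) (hs : 0 < s) (hB : 0 ≤ B)
    (hT : 0 ≤ T) (hT₁ : T ≤ 1) (hqs : q + s ≤ 2 * C) (hC : C ^ 2 * (1 - T ^ 2) ≤ q * s)
    (h : s * A ^ 2 + q * B ^ 2 ≤ 2 * C * A * B) : A * (1 - T) ≤ B * (1 + T) := by
  have hC₀ : 0 ≤ C := by linarith
  have hsA : s * A ≤ C * B * (1 + T) := by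
    have : (s * A - C * B) ^ 2 ≤ (C * T * B) ^ 2 :=
      calc (s * A - C * B) ^ 2 ≤ (C ^ 2 - q * s) * B ^ 2 := by nlinarith
        _ ≤ (C * T * B) ^ 2 := by nlinarith
    linarith [(abs_le_of_sq_le_sq' this (by positivity)).2]
  have hCs : C * (1 - T) ≤ s := by
    have : (C - s) ^ 2 ≤ (C * T) ^ 2 :=
      calc (C - s) ^ 2 = C ^ 2 - (2 * C - s) * s := by ring
        _ ≤ C ^ 2 - q * s := by nlinarith
        _ ≤ (C * T) ^ 2 := by linarith
    linarith [(abs_le_of_sq_le_sq' this (by positivity)).2]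
  have : s * (A * (1 - T)) ≤ s * (B * (1 + T)) := by
    nlinarith [mul_le_mul_of_nonneg_right hsA (sub_nonneg.mpr hT₁),
      mul_le_mul_of_nonneg_left hCs (by positivity : 0 ≤ B * (1 + T))]
  exact le_of_mul_le_mul_left this hs

theorem le_tanh_of_artanhR_le {d r : ℝ} (hd : d ∈ Set.Ioo (-1) 1) (h : artanhR d ≤ r) :
    d ≤ Real.tanh r := by
  rw [artanhR, ← Real.artanh_eq_half_log (Set.Ioo_subset_Icc_self hd), ← Real.artanh_tanh r,
    Real.artanh_le_artanh_iff hd ⟨Real.neg_one_lt_tanh r, Real.tanh_lt_one r⟩] at h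
  exact h

section Siegel

variable {m : ℕ}

def siegelLift (z : (Fin m → ℂ) × ℂ) : ℂ × EuclideanSpace ℂ (Fin (m + 1)) :=
  ((1 - I * z.2) / 2, WithLp.toLp 2 (Fin.cons ((1 + I * z.2) / 2) z.1))

theorem rhoC_eq_lorentzInner (z w : (Fin m → ℂ) × ℂ) :
    rhoC z w = lorentzInner (siegelLift z) (siegelLift w) := by
  simp only [rhoC, lorentzInner, siegelLift, PiLp.inner_apply,
    RCLike.inner_apply, Fin.sum_univ_succ, Fin.cons_zero, Fin.cons_succ, map_div₀, map_sub,
    map_add, map_one, map_mul, Complex.conj_I, Complex.conj_ofNat]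
  ring

theorem lorentzNormSq_siegelLift (z : (Fin m → ℂ) × ℂ) : lorentzNormSq (siegelLift z) = rho z := by
  have h := congrArg Complex.re ((lorentzInner_self _).symm.trans (rhoC_eq_lorentzInner z z).symm)
  rw [Complex.ofReal_re] at h
  rw [h]
  simp [rhoC, rho, Complex.mul_conj, Complex.normSq_eq_norm_sq, - Complex.ofReal_pow]
  ring

theorem lorentzNormSq_siegelLift_sub_nonpos (z w : (Fin m → ℂ) × ℂ) :
    lorentzNormSq (siegelLift z - siegelLift w) ≤ 0 := by
  have h := PiLp.norm_apply_le (siegelLift z - siegelLift w).2 0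
  have h₀ : ‖(siegelLift z - siegelLift w).1‖ = ‖(siegelLift z - siegelLift w).2 0‖ := by
    simp only [siegelLift, Prod.fst_sub, Prod.snd_sub, PiLp.sub_apply, Fin.cons_zero]
    rw [← norm_neg]
    congr 1
    ring
  rw [lorentzNormSq, sub_nonpos, h₀]
  gcongr

theorem rho_pos {z : (Fin m → ℂ) × ℂ} (hz : z ∈ Siegel m) : 0 < rho z := sub_pos.mpr hz

theorem lorentzNormSq_siegelLift_pos {z : (Fin m → ℂ) × ℂ} (hz : z ∈ Siegel m) :
    0 < lorentzNormSq (siegelLift z) := by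
  rw [lorentzNormSq_siegelLift]
  exact rho_pos hz

theorem rho_add_rho_le_two_mul_norm_rhoC (z w : (Fin m → ℂ) × ℂ) :
    rho z + rho w ≤ 2 * ‖rhoC z w‖ := by
  have h := lorentzNormSq_sub (siegelLift z) (siegelLift w)
  rw [lorentzNormSq_siegelLift, lorentzNormSq_siegelLift, ← rhoC_eq_lorentzInner] at h
  linarith [lorentzNormSq_siegelLift_sub_nonpos z w, Complex.re_le_norm (rhoC z w)]

theorem rho_mul_norm_rhoC_sq_add_le {z u : (Fin m → ℂ) × ℂ} (hz : z ∈ Siegel m)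
    (hu : u ∈ Siegel m) (v : (Fin m → ℂ) × ℂ) :
    rho v * ‖rhoC z u‖ ^ 2 + rho u * ‖rhoC z v‖ ^ 2 ≤
      2 * ‖rhoC u v‖ * ‖rhoC z u‖ * ‖rhoC z v‖ := by
  simpa [rhoC_eq_lorentzInner, lorentzNormSq_siegelLift] using
    lorentzNormSq_mul_norm_lorentzInner_sq_add_le (y := siegelLift v)
      (lorentzNormSq_siegelLift_pos hz) (lorentzNormSq_siegelLift_pos hu)

theorem tanh_nonneg_and_norm_rhoC_sq_mul_le_of_bDist_le {u v : (Fin m → ℂ) × ℂ} {r : ℝ}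
    (hu : u ∈ Siegel m) (hv : v ∈ Siegel m) (h : bDist u v ≤ r) :
    0 ≤ Real.tanh r ∧ ‖rhoC u v‖ ^ 2 * (1 - Real.tanh r ^ 2) ≤ rho u * rho v := by
  have hqs : 0 < rho u * rho v := mul_pos (rho_pos hu) (rho_pos hv)
  have hC : 0 < ‖rhoC u v‖ ^ 2 := by
    have : 0 < ‖rhoC u v‖ := by
      linarith [rho_add_rho_le_two_mul_norm_rhoC u v, rho_pos hu, rho_pos hv]
    positivity
  have hx : 0 < rho u * rho v / ‖rhoC u v‖ ^ 2 := div_pos hqs hC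
  have hd := le_tanh_of_artanhR_le
    ⟨by linarith [Real.sqrt_nonneg (1 - rho u * rho v / ‖rhoC u v‖ ^ 2)],
      (Real.sqrt_lt' one_pos).mpr (by linarith)⟩ h
  obtain ⟨hT, hd⟩ := Real.sqrt_le_iff.mp hd
  refine ⟨hT, ?_⟩
  have := div_mul_cancel₀ (rho u * rho v) hC.ne'
  nlinarith

end Siegel

theorem rhoC_ratio_bounds_general (m : ℕ) (r : ℝ)
    (z u v : (Fin m → ℂ) × ℂ) (hz : z ∈ Siegel m) (hu : u ∈ Siegel m) (hv : v ∈ Siegel m)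
    (huv : bDist u v ≤ r) :
    (1 - Real.tanh r) / (1 + Real.tanh r) ≤ ‖rhoC z u‖ / ‖rhoC z v‖ ∧
    ‖rhoC z u‖ / ‖rhoC z v‖ ≤ (1 + Real.tanh r) / (1 - Real.tanh r) := by
  obtain ⟨hT, hCT⟩ := tanh_nonneg_and_norm_rhoC_sq_mul_le_of_bDist_le hu hv huv
  have hT₁ : Real.tanh r < 1 := Real.tanh_lt_one r
  have hq : 0 < rho u := rho_pos hu
  have hs : 0 < rho v := rho_pos hv
  have hB : 0 < ‖rhoC z v‖ := by linarith [rho_add_rho_le_two_mul_norm_rhoC z v, rho_pos hz]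
  have hqs := rho_add_rho_le_two_mul_norm_rhoC u v
  have h3 := rho_mul_norm_rhoC_sq_add_le hz hu v
  constructor
  · rw [div_le_div_iff₀ (by linarith) hB]
    linarith [mul_one_sub_le_mul_one_add (A := ‖rhoC z v‖) (C := ‖rhoC u v‖) hs hq
      (norm_nonneg (rhoC z u)) hT hT₁.le (by linarith) (by linarith) (by linarith)]
  · rw [div_le_div_iff₀ hB (by linarith)]
    linarith [mul_one_sub_le_mul_one_add hq hs (norm_nonneg _) hT hT₁.le hqs hCT h3]

theorem rhoC_ratio_bounds (m : ℕ) (r : ℝ) (hr : 0 < r)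
    (z u v : (Fin m → ℂ) × ℂ) (hz : z ∈ Siegel m) (hu : u ∈ Siegel m) (hv : v ∈ Siegel m)
    (huv : bDist u v ≤ r) :
    (1 - Real.tanh r) / (1 + Real.tanh r) ≤ ‖rhoC z u‖ / ‖rhoC z v‖ ∧
    ‖rhoC z u‖ / ‖rhoC z v‖ ≤ (1 + Real.tanh r) / (1 - Real.tanh r) :=
  rhoC_ratio_bounds_general m r z u v hz hu hv huv
end
end

section
/- For any z ∈ U and r > 0, the Lebesgue volume of the Bergman metric ball D(z,r) = {w ∈ U : β(z,w) < r} equals (4πⁿ/n!) · tanh^{2n}(r)/(1 − tanh²r)^{n+1} · ρ(z)^{n+1}. -/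
open Complex MeasureTheory

noncomputable section

/-!
Write `w = (w', wₙ)`. Up to the factor `i/2`, `ρ(z,w)` is the conjugate of `wₙ - c(w')` for a point
`c(w')` depending affinely on `w'`, and `ρ(w) = Im (wₙ - c(w')) - ρ(z) - |w' - z'|²`. So with
`K = 1 - tanh² r` the ball `D(z,r) = {w : K |ρ(z,w)|² < ρ(z) ρ(w)}` meets every line `w' = const` in a
disc of area `(4πρ(z)/K) (A - |w' - z'|²)₊`, where `A = ρ(z) tanh² r / K`. By Fubini the volume is
`4πρ(z)/K` times `∫_{ℂᵐ} (A - |v|²)₊ dv`, and slicing the ball of radius `√A` in `ℂᵐ⁺¹` the same way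
shows that this integral is `πᵐ A^(m+1) / (m+1)!`.
-/

open Real Set ComplexConjugate

lemma ENNReal.ofReal_sqrt_pow_two_mul (x : ℝ) (n : ℕ) :
    ENNReal.ofReal √x ^ (2 * n) = ENNReal.ofReal x ^ n := by
  rw [pow_mul, ← ENNReal.ofReal_pow (Real.sqrt_nonneg x)]
  rcases le_total 0 x with hx | hx
  · rw [Real.sq_sqrt hx]
  · simp [Real.sqrt_eq_zero'.2 hx, ENNReal.ofReal_of_nonpos hx]

lemma Complex.volume_ball_sqrt (a : ℂ) (x : ℝ) :
    volume (Metric.ball a √x) = ENNReal.ofReal x * ENNReal.ofReal π := by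
  have hsq := ENNReal.ofReal_sqrt_pow_two_mul x 1
  rw [mul_one, pow_one] at hsq
  rw [Complex.volume_ball, hsq, ← NNReal.coe_real_pi, ENNReal.ofReal_coe_nnreal]

lemma Complex.setOf_mul_sq_norm_lt_eq_ball {a : ℝ} (b c : ℝ) (ha : 0 < a) :
    {ζ : ℂ | a * ‖ζ‖ ^ 2 < b * ζ.im - c} =
      Metric.ball ((b / (2 * a) : ℝ) * I) √(b ^ 2 / (4 * a ^ 2) - c / a) := by
  ext ζ
  have hsub : dist ζ ((b / (2 * a) : ℝ) * I) ^ 2 - (b ^ 2 / (4 * a ^ 2) - c / a) =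
      (a * ‖ζ‖ ^ 2 - (b * ζ.im - c)) / a := by
    rw [dist_eq_norm, Complex.sq_norm, Complex.sq_norm, normSq_apply, normSq_apply]
    simp only [sub_re, sub_im, mul_re, mul_im, ofReal_re, ofReal_im, I_re, I_im]
    field_simp
    ring
  rw [Metric.mem_ball, Real.lt_sqrt dist_nonneg, ← sub_neg, hsub, div_lt_iff₀ ha, zero_mul,
    sub_neg]
  rfl

lemma volume_setOf_sum_sq_norm_lt (ι : Type*) [Fintype ι] [Nonempty ι] (A : ℝ) :
    volume {x : ι → ℂ | ∑ i, ‖x i‖ ^ 2 < A} =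
      ENNReal.ofReal A ^ Fintype.card ι *
        ENNReal.ofReal (π ^ Fintype.card ι / (Fintype.card ι).factorial) := by
  have hset : {x : ι → ℂ | ∑ i, ‖x i‖ ^ 2 < A} =
      {x : ι → ℂ | (∑ i, ‖x i‖ ^ (2 : ℝ)) ^ (1 / (2 : ℝ)) < √A} := by
    ext x
    simp only [Real.rpow_two, ← Real.sqrt_eq_rpow]
    exact (Real.sqrt_lt_sqrt_iff (by positivity)).symm
  rw [hset, Complex.volume_sum_rpow_lt ι one_le_two, ENNReal.ofReal_sqrt_pow_two_mul,
    mul_div_cancel_left₀ _ two_ne_zero, Real.Gamma_nat_eq_factorial]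
  norm_num

lemma lintegral_ofReal_sub_sum_sq_norm (m : ℕ) (A : ℝ) :
    ∫⁻ v : Fin m → ℂ, ENNReal.ofReal (A - ∑ j, ‖v j‖ ^ 2) =
      ENNReal.ofReal (π ^ m / (m + 1).factorial) * ENNReal.ofReal A ^ (m + 1) := by
  have he := (volume_preserving_piFinSuccAbove (fun _ : Fin (m + 1) => ℂ) 0).symm
  have hslice (v : Fin m → ℂ) : (fun s => (s, v)) ⁻¹'
      ((MeasurableEquiv.piFinSuccAbove (fun _ : Fin (m + 1) => ℂ) 0).symm ⁻¹'
        {x | ∑ i, ‖x i‖ ^ 2 < A}) = Metric.ball 0 √(A - ∑ j, ‖v j‖ ^ 2) := by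
    ext s
    simp [Fin.sum_univ_succ, Real.lt_sqrt (norm_nonneg s), lt_sub_iff_add_lt]
  have hmeas : MeasurableSet {x : Fin (m + 1) → ℂ | ∑ i, ‖x i‖ ^ 2 < A} :=
    measurableSet_lt (by fun_prop) measurable_const
  have hball := volume_setOf_sum_sq_norm_lt (Fin (m + 1)) A
  rw [← he.measure_preimage hmeas.nullMeasurableSet, Measure.volume_eq_prod,
    Measure.prod_apply_symm (hmeas.preimage he.measurable)] at hball
  simp only [hslice, Complex.volume_ball_sqrt] at hball
  rw [lintegral_mul_const _ (by fun_prop)] at hball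
  refine (ENNReal.mul_left_inj (c := ENNReal.ofReal π) (by simp [Real.pi_pos])
    ENNReal.ofReal_ne_top).1 ?_
  rw [hball, Fintype.card_fin, mul_comm, mul_right_comm, ← ENNReal.ofReal_mul (by positivity),
    pow_succ, div_mul_eq_mul_div]

lemma artanhR_sqrt_lt_iff {s r : ℝ} (hs : s < 1) (hr : 0 < r) :
    artanhR √s < r ↔ s < Real.tanh r ^ 2 := by
  have htanh : 0 < Real.tanh r := by
    rw [Real.tanh_eq_sinh_div_cosh]; exact div_pos (Real.sinh_pos_iff.2 hr) (Real.cosh_pos r)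
  have hsqrt : √s ∈ Ioo (-1) 1 :=
    ⟨by linarith [Real.sqrt_nonneg s], (Real.sqrt_lt' one_pos).2 (by simpa using hs)⟩
  rw [artanhR, ← Real.artanh_eq_half_log (Ioo_subset_Icc_self hsqrt)]
  nth_rewrite 1 [← Real.artanh_tanh r]
  rw [Real.artanh_lt_artanh_iff hsqrt ⟨Real.neg_one_lt_tanh r, Real.tanh_lt_one r⟩,
    Real.sqrt_lt' htanh]

lemma sum_sq_norm_sub {ι : Type*} [Fintype ι] (u v : ι → ℂ) :
    ∑ j, ‖u j - v j‖ ^ 2 = ∑ j, ‖u j‖ ^ 2 + ∑ j, ‖v j‖ ^ 2 - 2 * (∑ j, v j * conj (u j)).re := by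
  simp only [re_sum, Finset.mul_sum, ← Finset.sum_add_distrib, ← Finset.sum_sub_distrib,
    Complex.sq_norm, normSq_apply, mul_re, conj_re, conj_im, sub_re, sub_im]
  exact Finset.sum_congr rfl fun j _ => by ring

section Siegel

variable {m : ℕ}

lemma mem_Siegel_iff_rho_pos {z : (Fin m → ℂ) × ℂ} : z ∈ Siegel m ↔ 0 < rho z := by
  rw [rho, sub_pos]; rfl

/-- The zero of `wₙ ↦ ρ(z, (w', wₙ))`. -/
def rhoCRoot (z : (Fin m → ℂ) × ℂ) (w' : Fin m → ℂ) : ℂ :=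
  conj z.2 + 2 * I * conj (∑ j, z.1 j * conj (w' j))

lemma rhoC_eq_I_div_two_mul_conj (z w : (Fin m → ℂ) × ℂ) :
    rhoC z w = I / 2 * conj (w.2 - rhoCRoot z w.1) := by
  simp only [rhoC, rhoCRoot, map_sub, map_add, map_mul, conj_conj, conj_I, map_ofNat]
  linear_combination -(∑ j, z.1 j * conj (w.1 j)) * I_sq

lemma norm_rhoC (z w : (Fin m → ℂ) × ℂ) : ‖rhoC z w‖ = ‖w.2 - rhoCRoot z w.1‖ / 2 := by
  rw [rhoC_eq_I_div_two_mul_conj, norm_mul, Complex.norm_conj]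
  simp [div_eq_inv_mul]

lemma im_rhoCRoot (z : (Fin m → ℂ) × ℂ) (w' : Fin m → ℂ) :
    (rhoCRoot z w').im = 2 * (∑ j, z.1 j * conj (w' j)).re - z.2.im := by
  simp [rhoCRoot, sub_eq_neg_add]

lemma rho_eq_im_sub (z w : (Fin m → ℂ) × ℂ) :
    rho w = (w.2 - rhoCRoot z w.1).im - rho z - ∑ j, ‖w.1 j - z.1 j‖ ^ 2 := by
  rw [sum_sq_norm_sub, sub_im, im_rhoCRoot, rho, rho]
  ring

lemma re_rhoC (z w : (Fin m → ℂ) × ℂ) :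
    (rhoC z w).re = (rho z + rho w + ∑ j, ‖w.1 j - z.1 j‖ ^ 2) / 2 := by
  have hre (ζ : ℂ) : (I / 2 * conj ζ).re = ζ.im / 2 := by simp [mul_re, div_eq_inv_mul]
  rw [rhoC_eq_I_div_two_mul_conj, hre, rho_eq_im_sub z w]
  ring

lemma bDist_lt_iff {z w : (Fin m → ℂ) × ℂ} (hz : 0 < rho z) (hw : 0 < rho w) {r : ℝ}
    (hr : 0 < r) : bDist z w < r ↔ (1 - Real.tanh r ^ 2) * ‖rhoC z w‖ ^ 2 < rho z * rho w := by
  have hre : (rho z + rho w) / 2 ≤ (rhoC z w).re := by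
    rw [re_rhoC]
    linarith [Finset.sum_nonneg fun j (_ : j ∈ Finset.univ) => sq_nonneg ‖w.1 j - z.1 j‖]
  have hnorm : 0 < ‖rhoC z w‖ ^ 2 := by
    have : 0 < ‖rhoC z w‖ := by linarith [Complex.re_le_norm (rhoC z w)]
    positivity
  rw [bDist, artanhR_sqrt_lt_iff (sub_lt_self 1 (div_pos (mul_pos hz hw) hnorm)) hr, sub_lt_comm,
    lt_div_iff₀ hnorm]

lemma bBall_eq {z : (Fin m → ℂ) × ℂ} (hz : z ∈ Siegel m) {r : ℝ} (hr : 0 < r) :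
    bBall z r = {w | (1 - Real.tanh r ^ 2) * ‖rhoC z w‖ ^ 2 < rho z * rho w} := by
  rw [mem_Siegel_iff_rho_pos] at hz
  ext w
  refine ⟨fun ⟨hw, hlt⟩ => (bDist_lt_iff hz (mem_Siegel_iff_rho_pos.1 hw) hr).1 hlt, fun h => ?_⟩
  have hw : 0 < rho w := by
    have : 0 ≤ (1 - Real.tanh r ^ 2) * ‖rhoC z w‖ ^ 2 :=
      mul_nonneg (sub_nonneg.2 (Real.tanh_sq_lt_one r).le) (sq_nonneg _)
    exact pos_of_mul_pos_right (this.trans_lt h) hz.le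
  exact ⟨mem_Siegel_iff_rho_pos.2 hw, (bDist_lt_iff hz hw hr).2 h⟩

lemma preimage_mk_setOf_rhoC_lt (z : (Fin m → ℂ) × ℂ) (w' : Fin m → ℂ) (K : ℝ) :
    Prod.mk w' ⁻¹' {w | K * ‖rhoC z w‖ ^ 2 < rho z * rho w} =
      (· + -rhoCRoot z w') ⁻¹' {ζ : ℂ | K / 4 * ‖ζ‖ ^ 2 <
        rho z * ζ.im - rho z * (rho z + ∑ j, ‖w' j - z.1 j‖ ^ 2)} := by
  ext wₙ
  simp only [mem_preimage, mem_ofPred_eq, norm_rhoC, rho_eq_im_sub z (w', wₙ), ← sub_eq_add_neg]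
  ring_nf

lemma volume_setOf_rhoC_lt {z : (Fin m → ℂ) × ℂ} (hz : 0 ≤ rho z) {K : ℝ} (hK : 0 < K) :
    volume {w | K * ‖rhoC z w‖ ^ 2 < rho z * rho w} =
      ENNReal.ofReal (4 * π * rho z / K) * ENNReal.ofReal (π ^ m / (m + 1).factorial) *
        ENNReal.ofReal ((1 - K) * rho z / K) ^ (m + 1) := by
  have hmeas : MeasurableSet {w | K * ‖rhoC z w‖ ^ 2 < rho z * rho w} :=
    measurableSet_lt (by unfold rhoC; fun_prop) (by unfold rho; fun_prop)
  set A := (1 - K) * rho z / K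
  have hslice (w' : Fin m → ℂ) :
      volume (Prod.mk w' ⁻¹' {w | K * ‖rhoC z w‖ ^ 2 < rho z * rho w}) =
        ENNReal.ofReal (4 * π * rho z / K) * ENNReal.ofReal (A - ∑ j, ‖(w' - z.1) j‖ ^ 2) := by
    rw [preimage_mk_setOf_rhoC_lt, measure_preimage_add_right,
      Complex.setOf_mul_sq_norm_lt_eq_ball _ _ (by positivity), Complex.volume_ball_sqrt,
      ← ENNReal.ofReal_mul' Real.pi_pos.le, ← ENNReal.ofReal_mul (by positivity)]
    congr 1
    simp only [A, Pi.sub_apply]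
    field_simp
    ring
  rw [Measure.volume_eq_prod, Measure.prod_apply hmeas]
  simp only [hslice]
  rw [lintegral_const_mul _ (by fun_prop),
    lintegral_sub_right_eq_self (fun v => ENNReal.ofReal (A - ∑ j, ‖v j‖ ^ 2)) z.1,
    lintegral_ofReal_sub_sum_sq_norm, ← mul_assoc]

end Siegel

theorem volume_bBall (m : ℕ) (z : (Fin m → ℂ) × ℂ) (hz : z ∈ Siegel m) (r : ℝ) (hr : 0 < r) :
    volume (bBall z r) =
      ENNReal.ofReal (4 * Real.pi ^ (m + 1) / (Nat.factorial (m + 1)) *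
        Real.tanh r ^ (2 * (m + 1)) / (1 - Real.tanh r ^ 2) ^ (m + 2) * rho z ^ (m + 2)) := by
  have hρ : 0 < rho z := mem_Siegel_iff_rho_pos.1 hz
  have hK : 0 < 1 - Real.tanh r ^ 2 := sub_pos.2 (Real.tanh_sq_lt_one r)
  rw [bBall_eq hz hr, volume_setOf_rhoC_lt hρ.le hK, sub_sub_cancel,
    ← ENNReal.ofReal_pow (by positivity), ← ENNReal.ofReal_mul (by positivity),
    ← ENNReal.ofReal_mul (by positivity)]
  congr 1
  rw [div_pow, mul_pow, ← pow_mul]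
  field_simp
  ring
end
end
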